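/- Let G be a finite simple graph with positive real vertex weights ω, and let u, v be vertices forming a u-v-funnel (i.e., u ∈ N(v) and N(v) \ {u} is a clique in G). If ω(v) ≥ ω(x) for every x ∈ N(v) \ {u}, then α_ω(G) = max( ω(u) + α_ω(G − N[u]), ω(v) + α_ω(G − N[v]) ). -/

import Mathlib

/-!
Take a maximum-weight independent set `S`. If `u ∈ S`, removing `u` leaves an independent set
avoiding `N[u]`, which gives the first term. Otherwise `S` meets `N[v]` inside the clique
`{v} ∪ (N(v) \ {u})`, hence in at most one vertex `x`, and `ω(x) ≤ ω(v)`; trading `x` for `v`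
gives the second term. Conversely, adding `y` to an independent set avoiding `N[y]` keeps it
independent, so both terms are at most `α_ω(G)`.
-/

open scoped Classical

/-- `S` is an independent set of vertices in `G`: no two members are adjacent. -/
def IsIndepSet {V : Type*} (G : SimpleGraph V) (S : Finset V) : Prop :=
  ∀ a ∈ S, ∀ b ∈ S, ¬ G.Adj a b

/-- The maximum total `w`-weight of an independent set of `G` contained in `A`
(the weighted independence number of the subgraph of `G` induced on `A`). -/
noncomputable def alphaOn {V : Type*} [Fintype V] (G : SimpleGraph V) (w : V → ℝ)
    (A : Set V) : ℝ :=
  sSup {x : ℝ | ∃ S : Finset V, ↑S ⊆ A ∧ IsIndepSet G S ∧ x = ∑ v ∈ S, w v}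

/-- The maximum total `w`-weight of an independent set of `G`. -/
noncomputable def alpha {V : Type*} [Fintype V] (G : SimpleGraph V) (w : V → ℝ) : ℝ :=
  alphaOn G w Set.univ

/-- `S` is a maximum `w`-weight independent set of `G`. -/
def IsMWIS {V : Type*} [Fintype V] (G : SimpleGraph V) (w : V → ℝ) (S : Finset V) : Prop :=
  IsIndepSet G S ∧ ∑ v ∈ S, w v = alpha G w

/-- The closed neighborhood `N[v]` of a vertex. -/
def closedNbhd {V : Type*} (G : SimpleGraph V) (v : V) : Set V :=
  insert v (G.neighborSet v)

/-- The open neighborhood `N(S)` of a set of vertices. -/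
def setNbhd {V : Type*} (G : SimpleGraph V) (S : Set V) : Set V :=
  (⋃ s ∈ S, G.neighborSet s) \ S

/-- The closed neighborhood `N[S]` of a set of vertices. -/
def closedSetNbhd {V : Type*} (G : SimpleGraph V) (S : Set V) : Set V :=
  setNbhd G S ∪ S

namespace IsIndepSet

variable {V : Type*} {G : SimpleGraph V} {S T : Finset V}

lemma mono (hS : IsIndepSet G S) (hTS : T ⊆ S) : IsIndepSet G T :=
  fun a ha b hb => hS a (hTS ha) b (hTS hb)

lemma insert_of_subset_compl_closedNbhd {y : V} (hS : IsIndepSet G S)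
    (hSy : ↑S ⊆ (closedNbhd G y)ᶜ) : IsIndepSet G (insert y S) := by
  intro a ha b hb
  rw [Finset.mem_insert] at ha hb
  rcases ha with rfl | ha <;> rcases hb with rfl | hb
  · exact G.irrefl
  · exact fun hab => hSy hb (Set.mem_insert_of_mem _ hab)
  · exact fun hab => hSy ha (Set.mem_insert_of_mem _ hab.symm)
  · exact hS a ha b hb

lemma coe_erase_subset_compl_closedNbhd {y : V} (hS : IsIndepSet G S) (hy : y ∈ S) :
    ↑(S.erase y) ⊆ (closedNbhd G y)ᶜ := by
  rintro s hs (rfl | hys)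
  · exact Finset.notMem_erase s S hs
  · exact hS y hy s (Finset.mem_of_mem_erase hs) hys

lemma eq_of_mem_isClique {K : Set V} (hS : IsIndepSet G S) (hK : G.IsClique K) {a b : V}
    (ha : a ∈ S) (hb : b ∈ S) (haK : a ∈ K) (hbK : b ∈ K) : a = b := by
  by_contra hab
  exact hS a ha b hb (hK haK hbK hab)

end IsIndepSet

section Weighted

variable {V : Type*} [Fintype V] {G : SimpleGraph V} {w : V → ℝ}

variable (G w) in
lemma finite_indepSet_weights (A : Set V) :
    {x : ℝ | ∃ S : Finset V, ↑S ⊆ A ∧ IsIndepSet G S ∧ x = ∑ v ∈ S, w v}.Finite := by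
  refine (Set.finite_range fun T : Finset V => ∑ x ∈ T, w x).subset ?_
  rintro _ ⟨T, -, -, rfl⟩
  exact ⟨T, rfl⟩

lemma sum_le_alphaOn {A : Set V} {S : Finset V} (hS : IsIndepSet G S) (hSA : ↑S ⊆ A) :
    ∑ x ∈ S, w x ≤ alphaOn G w A :=
  le_csSup (finite_indepSet_weights G w A).bddAbove ⟨S, hSA, hS, rfl⟩

variable (G w) in
lemma exists_sum_eq_alphaOn (A : Set V) :
    ∃ S : Finset V, ↑S ⊆ A ∧ IsIndepSet G S ∧ ∑ x ∈ S, w x = alphaOn G w A := by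
  have hne : {x : ℝ | ∃ S : Finset V, ↑S ⊆ A ∧ IsIndepSet G S ∧ x = ∑ v ∈ S, w v}.Nonempty :=
    ⟨0, ∅, by simp, fun a ha => absurd ha (Finset.notMem_empty a), by simp⟩
  obtain ⟨S, hSA, hS, hsum⟩ := hne.csSup_mem (finite_indepSet_weights G w A)
  exact ⟨S, hSA, hS, hsum.symm⟩

variable (G w) in
lemma exists_isMWIS : ∃ S : Finset V, IsMWIS G w S := by
  obtain ⟨S, -, hS, hsum⟩ := exists_sum_eq_alphaOn G w Set.univ
  exact ⟨S, hS, hsum⟩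

lemma sum_le_add_alphaOn {A : Set V} {S : Finset V} {x : V} (hS : IsIndepSet G S) (hx : x ∈ S)
    (hSA : ↑(S.erase x) ⊆ A) : ∑ y ∈ S, w y ≤ w x + alphaOn G w A := by
  rw [← Finset.add_sum_erase S w hx]
  exact add_le_add le_rfl (sum_le_alphaOn (hS.mono (Finset.erase_subset x S)) hSA)

lemma IsIndepSet.sum_le_add_alphaOn_compl_closedNbhd {S : Finset V} {y : V}
    (hS : IsIndepSet G S) (hy : y ∈ S) :
    ∑ x ∈ S, w x ≤ w y + alphaOn G w (closedNbhd G y)ᶜ :=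
  sum_le_add_alphaOn hS hy (hS.coe_erase_subset_compl_closedNbhd hy)

variable (G w) in
lemma add_alphaOn_compl_closedNbhd_le_alpha (y : V) :
    w y + alphaOn G w (closedNbhd G y)ᶜ ≤ alpha G w := by
  obtain ⟨S, hSy, hS, hsum⟩ := exists_sum_eq_alphaOn G w (closedNbhd G y)ᶜ
  have hyS : y ∉ S := fun hy => hSy hy (Set.mem_insert y _)
  have := sum_le_alphaOn (w := w) (hS.insert_of_subset_compl_closedNbhd hSy) (Set.subset_univ _)
  rwa [Finset.sum_insert hyS, hsum] at this

lemma sum_le_add_alphaOn_compl_closedNbhd_of_isClique {S : Finset V} {K : Set V} {v : V}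
    (hS : IsIndepSet G S) (hK : G.IsClique K) (hSK : ∀ x ∈ S, x ∈ closedNbhd G v → x ∈ K)
    (hwK : ∀ x ∈ K, w x ≤ w v) (hv : 0 ≤ w v) :
    ∑ x ∈ S, w x ≤ w v + alphaOn G w (closedNbhd G v)ᶜ := by
  by_cases hmeet : ∃ x ∈ S, x ∈ closedNbhd G v
  · obtain ⟨x, hxS, hxv⟩ := hmeet
    have hsub : ↑(S.erase x) ⊆ (closedNbhd G v)ᶜ := by
      intro s hs hsv
      have hsS := Finset.mem_of_mem_erase hs
      exact Finset.ne_of_mem_erase hs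
        (hS.eq_of_mem_isClique hK hsS hxS (hSK s hsS hsv) (hSK x hxS hxv))
    linarith [sum_le_add_alphaOn (w := w) hS hxS hsub, hwK x (hSK x hxS hxv)]
  · push Not at hmeet
    have hSv : ↑S ⊆ (closedNbhd G v)ᶜ := fun s hs => hmeet s hs
    linarith [sum_le_alphaOn (w := w) hS hSv]

end Weighted

theorem stmt_11_general {V : Type*} [Fintype V] (G : SimpleGraph V) (w : V → ℝ)
    (hw : ∀ x, 0 < w x) (u v : V)
    (hclique : G.IsClique (G.neighborSet v \ {u}))
    (hwt : ∀ x ∈ G.neighborSet v \ {u}, w x ≤ w v) :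
    alpha G w = max (w u + alphaOn G w (closedNbhd G u)ᶜ)
      (w v + alphaOn G w (closedNbhd G v)ᶜ) := by
  refine le_antisymm ?_ (max_le (add_alphaOn_compl_closedNbhd_le_alpha G w u)
    (add_alphaOn_compl_closedNbhd_le_alpha G w v))
  obtain ⟨S, hS, hSα⟩ := exists_isMWIS G w
  rw [← hSα]
  by_cases huS : u ∈ S
  · exact (hS.sum_le_add_alphaOn_compl_closedNbhd huS).trans (le_max_left _ _)
  · have hK : G.IsClique (insert v (G.neighborSet v \ {u})) :=
      hclique.insert fun x hx _ => hx.1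
    have hSK : ∀ x ∈ S, x ∈ closedNbhd G v → x ∈ insert v (G.neighborSet v \ {u}) := by
      rintro x hxS (rfl | hxv)
      · exact Set.mem_insert x _
      · exact Set.mem_insert_of_mem v ⟨hxv, fun hxu => huS (hxu ▸ hxS)⟩
    have hwK : ∀ x ∈ insert v (G.neighborSet v \ {u}), w x ≤ w v := by
      rintro x (rfl | hx)
      exacts [le_rfl, hwt x hx]
    exact (sum_le_add_alphaOn_compl_closedNbhd_of_isClique hS hK hSK hwK (hw v).le).trans
      (le_max_right _ _)

theorem stmt_11 {V : Type*} [Fintype V] (G : SimpleGraph V) (w : V → ℝ)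
    (hw : ∀ x, 0 < w x) (u v : V)
    (hu : u ∈ G.neighborSet v)
    (hclique : G.IsClique (G.neighborSet v \ {u}))
    (hwt : ∀ x ∈ G.neighborSet v \ {u}, w x ≤ w v) :
    alpha G w = max (w u + alphaOn G w (closedNbhd G u)ᶜ)
      (w v + alphaOn G w (closedNbhd G v)ᶜ) :=
  stmt_11_general G w hw u v hclique hwt
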